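/- arXiv:1610.04016 — 5 statements merged into one kernel-verified Lean document; each statement's English description precedes it below -/
import Mathlib

section
/- If B ∈ GL(3,ℝ) stabilizes each of the three flags (span(e₁), span{e₁,e₂}), (span(e₃), span{e₂,e₃}) and (span(e₁+e₂+e₃), span{e₁+e₃, e₂}), then B is a scalar matrix. -/
open Matrix Submodule

/-- A matrix `M` stabilizes the flag `(V, W)` if it maps `V` onto `V`
and `W` onto `W`. -/
def StabilizesFlag (M : Matrix (Fin 3) (Fin 3) ℝ)
    (V W : Submodule ℝ (Fin 3 → ℝ)) : Prop :=
  Submodule.map M.mulVecLin V = V ∧ Submodule.map M.mulVecLin W = W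

/-- if `B ∈ GL(3,ℝ)` stabilizes the three flags
`(span e₁, span{e₁,e₂})`, `(span e₃, span{e₂,e₃})` and
`(span(e₁+e₂+e₃), span{e₁+e₃, e₂})`, then `B` is a scalar matrix. -/
theorem stmt7 (B : GL (Fin 3) ℝ)
    (h1 : StabilizesFlag (B : Matrix (Fin 3) (Fin 3) ℝ)
      (span ℝ {![1,0,0]}) (span ℝ {![1,0,0], ![0,1,0]}))
    (h2 : StabilizesFlag (B : Matrix (Fin 3) (Fin 3) ℝ)
      (span ℝ {![0,0,1]}) (span ℝ {![0,1,0], ![0,0,1]}))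
    (h3 : StabilizesFlag (B : Matrix (Fin 3) (Fin 3) ℝ)
      (span ℝ {![1,1,1]}) (span ℝ {![1,0,1], ![0,1,0]})) :
    ∃ c : ℝ, (B : Matrix (Fin 3) (Fin 3) ℝ) = c • (1 : Matrix (Fin 3) (Fin 3) ℝ) := by
  set M : Matrix (Fin 3) (Fin 3) ℝ := (B : Matrix (Fin 3) (Fin 3) ℝ) with hM
  -- column 0
  have ha : M.mulVecLin ![1,0,0] ∈ span ℝ ({![1,0,0]} : Set (Fin 3 → ℝ)) := by
    rw [← h1.1]; exact Submodule.mem_map_of_mem (mem_span_singleton_self _)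
  obtain ⟨a, ha⟩ := mem_span_singleton.mp ha
  -- column 2
  have hd : M.mulVecLin ![0,0,1] ∈ span ℝ ({![0,0,1]} : Set (Fin 3 → ℝ)) := by
    rw [← h2.1]; exact Submodule.mem_map_of_mem (mem_span_singleton_self _)
  obtain ⟨d, hd⟩ := mem_span_singleton.mp hd
  -- column 1 in two planes
  have hb1 : M.mulVecLin ![0,1,0] ∈ span ℝ ({![1,0,0], ![0,1,0]} : Set (Fin 3 → ℝ)) := by
    rw [← h1.2]
    exact Submodule.mem_map_of_mem (subset_span (by simp))
  obtain ⟨p, q, hpq⟩ := mem_span_pair.mp hb1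
  have hb2 : M.mulVecLin ![0,1,0] ∈ span ℝ ({![0,1,0], ![0,0,1]} : Set (Fin 3 → ℝ)) := by
    rw [← h2.2]
    exact Submodule.mem_map_of_mem (subset_span (by simp))
  obtain ⟨r, s, hrs⟩ := mem_span_pair.mp hb2
  -- diagonal vector
  have hc : M.mulVecLin ![1,1,1] ∈ span ℝ ({![1,1,1]} : Set (Fin 3 → ℝ)) := by
    rw [← h3.1]; exact Submodule.mem_map_of_mem (mem_span_singleton_self _)
  obtain ⟨c, hc⟩ := mem_span_singleton.mp hc
  simp only [mulVecLin_apply] at ha hd hpq hrs hc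
  have Ha0 := congrFun ha 0; have Ha1 := congrFun ha 1; have Ha2 := congrFun ha 2
  have Hd0 := congrFun hd 0; have Hd1 := congrFun hd 1; have Hd2 := congrFun hd 2
  have Hp0 := congrFun hpq 0; have Hp1 := congrFun hpq 1; have Hp2 := congrFun hpq 2
  have Hr0 := congrFun hrs 0; have Hr1 := congrFun hrs 1; have Hr2 := congrFun hrs 2
  have Hc0 := congrFun hc 0; have Hc1 := congrFun hc 1; have Hc2 := congrFun hc 2
  simp [Matrix.mulVec, dotProduct, Fin.sum_univ_three] at Ha0 Ha1 Ha2 Hd0 Hd1 Hd2 Hp0 Hp1 Hp2 Hr0 Hr1 Hr2 Hc0 Hc1 Hc2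
  refine ⟨c, ?_⟩
  ext i j
  fin_cases i <;> fin_cases j <;>
    simp [Matrix.one_apply] <;> linarith
end

section
/- Let X ∈ ℝ with X ≠ 0 and X ≠ −1. If B ∈ GL(3,ℝ) stabilizes each of the three flags (span(e₁), span{e₁,e₂}), (span(e₃), span{e₂,e₃}) and (span(e₁−e₂+e₃), Q), where Q = {v ∈ ℝ³ : v₁ + (1+X)v₂ + Xv₃ = 0}, then B is a scalar matrix. -/
open Matrix Submodule

/-- The plane `Q = {v ∈ ℝ³ : v₁ + (1+X)v₂ + Xv₃ = 0}`. -/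
noncomputable def planeQ (X : ℝ) : Submodule ℝ (Fin 3 → ℝ) :=
  LinearMap.ker ((LinearMap.proj 0 : (Fin 3 → ℝ) →ₗ[ℝ] ℝ)
    + (1 + X) • LinearMap.proj 1 + X • LinearMap.proj 2)

/-- let `X ≠ 0`, `X ≠ -1`. If `B ∈ GL(3,ℝ)` stabilizes the three flags
`(span e₁, span{e₁,e₂})`, `(span e₃, span{e₂,e₃})` and `(span(e₁-e₂+e₃), Q)` with
`Q = {v : v₁ + (1+X)v₂ + Xv₃ = 0}`, then `B` is a scalar matrix. -/
theorem stmt9 (X : ℝ) (hX0 : X ≠ 0) (hX1 : X ≠ -1) (B : GL (Fin 3) ℝ)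
    (h1 : StabilizesFlag (B : Matrix (Fin 3) (Fin 3) ℝ)
      (span ℝ {![1,0,0]}) (span ℝ {![1,0,0], ![0,1,0]}))
    (h2 : StabilizesFlag (B : Matrix (Fin 3) (Fin 3) ℝ)
      (span ℝ {![0,0,1]}) (span ℝ {![0,1,0], ![0,0,1]}))
    (h3 : StabilizesFlag (B : Matrix (Fin 3) (Fin 3) ℝ)
      (span ℝ {![1,-1,1]}) (planeQ X)) :
    ∃ c : ℝ, (B : Matrix (Fin 3) (Fin 3) ℝ) = c • (1 : Matrix (Fin 3) (Fin 3) ℝ) := by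
  obtain ⟨h11, h12⟩ := h1
  obtain ⟨h21, h22⟩ := h2
  obtain ⟨h31, -⟩ := h3
  set M := (B : Matrix (Fin 3) (Fin 3) ℝ) with hM
  have m1 : M.mulVec ![1,0,0] ∈ span ℝ {![(1:ℝ),0,0]} := by
    rw [← h11]
    exact ⟨![1,0,0], subset_span rfl, M.mulVecLin_apply _⟩
  have m3 : M.mulVec ![0,0,1] ∈ span ℝ {![(0:ℝ),0,1]} := by
    rw [← h21]
    exact ⟨![0,0,1], subset_span rfl, M.mulVecLin_apply _⟩
  have mv : M.mulVec ![1,-1,1] ∈ span ℝ {![(1:ℝ),-1,1]} := by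
    rw [← h31]
    exact ⟨![1,-1,1], subset_span rfl, M.mulVecLin_apply _⟩
  have m2a : M.mulVec ![0,1,0] ∈ span ℝ {![(1:ℝ),0,0], ![0,1,0]} := by
    rw [← h12]
    exact ⟨![0,1,0], subset_span (Or.inr rfl), M.mulVecLin_apply _⟩
  have m2b : M.mulVec ![0,1,0] ∈ span ℝ {![(0:ℝ),1,0], ![0,0,1]} := by
    rw [← h22]
    exact ⟨![0,1,0], subset_span (Or.inl rfl), M.mulVecLin_apply _⟩
  obtain ⟨a, ha⟩ := Submodule.mem_span_singleton.1 m1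
  obtain ⟨d, hd⟩ := Submodule.mem_span_singleton.1 m3
  obtain ⟨t, ht⟩ := Submodule.mem_span_singleton.1 mv
  obtain ⟨p, q, hpq⟩ := Submodule.mem_span_pair.1 m2a
  obtain ⟨r, s, hrs⟩ := Submodule.mem_span_pair.1 m2b
  have ha0 := congrFun ha 0
  have ha1 := congrFun ha 1
  have ha2 := congrFun ha 2
  have hd0 := congrFun hd 0
  have hd1 := congrFun hd 1
  have hd2 := congrFun hd 2
  have ht0 := congrFun ht 0
  have ht1 := congrFun ht 1
  have ht2 := congrFun ht 2
  have hpq0 := congrFun hpq 0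
  have hpq2 := congrFun hpq 2
  have hrs0 := congrFun hrs 0
  have hrs1 := congrFun hrs 1
  simp [mulVec, dotProduct, Fin.sum_univ_three] at ha0 ha1 ha2 hd0 hd1 hd2 ht0 ht1 ht2 hpq0 hpq2 hrs0 hrs1
  refine ⟨t, ?_⟩
  ext i j
  fin_cases i <;> fin_cases j <;>
    simp [Matrix.one_apply, Matrix.smul_apply] <;> linarith
end

section
/- Let (V₀,W₀), (V₁,W₁), (V₂,W₂) be pairwise transverse flags in ℝ³. Then there exists g ∈ GL(3,ℝ) mapping (V₀,W₀) to (span(e₁), span{e₁,e₂}), mapping (V₁,W₁) to (span(e₃), span{e₂,e₃}), and mapping (V₂,W₂) to one of the following flags: (span(e₁−e₂+e₃), {v : v₁+(1+X)v₂+Xv₃ = 0}) for some X ∈ ℝ with X ∉ {0,−1}; or (span(e₁+e₃), {v : v₁+v₂−v₃ = 0}); or (span(e₁+e₂+e₃), span{e₁+e₃, e₂}); or (span(e₁+e₃), span{e₁+e₃, e₂}). -/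
open Matrix Submodule

/-- A flag in `ℝ³`: a line contained in a plane. -/
def IsFlag (V W : Submodule ℝ (Fin 3 → ℝ)) : Prop :=
  Module.finrank ℝ V = 1 ∧ Module.finrank ℝ W = 2 ∧ V ≤ W

/-- Two flags `(V,W)` and `(V',W')` are transverse if `V ⊄ W'` and `V' ⊄ W`. -/
def TransverseFlags (V W V' W' : Submodule ℝ (Fin 3 → ℝ)) : Prop :=
  ¬ V ≤ W' ∧ ¬ V' ≤ W

/-- The plane `P = {v ∈ ℝ³ : v₁ + v₂ - v₃ = 0}`. -/
noncomputable def planeP : Submodule ℝ (Fin 3 → ℝ) :=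
  LinearMap.ker ((LinearMap.proj 0 : (Fin 3 → ℝ) →ₗ[ℝ] ℝ)
    + LinearMap.proj 1 - LinearMap.proj 2)

/-!
Two transverse flags `(V₀,W₀)`, `(V₁,W₁)` in `ℝ³` give the basis `v₀ ∈ V₀`, `u ∈ W₀ ∩ W₁`,
`v₁ ∈ V₁`, and sending it to `e₁, e₂, e₃` maps them to the standard pair of flags. The invertible
diagonal matrices fix this standard pair. A flag transverse to both standard flags has the shape
`V = ⟨(a,b,c)⟩`, `W = ⟨(a,b,c), (0,e,f)⟩` with `a, c, e ≠ 0` and `bf ≠ ce`, and a diagonal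
matrix rescales it to one of the four normal forms, according to which of `b` and `f` vanish.
-/

section LinearAlgebra

variable {K E E' : Type*} [Field K] [AddCommGroup E] [Module K E] [AddCommGroup E'] [Module K E']

theorem Submodule.exists_mem_inf_ne_zero_of_finrank_lt_add [FiniteDimensional K E]
    {W₁ W₂ : Submodule K E}
    (h : Module.finrank K E < Module.finrank K W₁ + Module.finrank K W₂) :
    ∃ u ∈ W₁ ⊓ W₂, u ≠ 0 := by
  refine (W₁ ⊓ W₂).ne_bot_iff.mp fun hbot => ?_
  have hsum := finrank_sup_add_finrank_inf_eq W₁ W₂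
  rw [hbot, finrank_bot] at hsum
  have := finrank_le (W₁ ⊔ W₂)
  omega

theorem Submodule.exists_eq_span_singleton_of_finrank_eq_one {V : Submodule K E}
    (h : Module.finrank K V = 1) : ∃ v ≠ 0, V = K ∙ v := by
  obtain ⟨v, hv, hv0⟩ := V.ne_bot_iff.mp (isAtom_iff_finrank_eq_one.mpr h).ne_bot
  exact ⟨v, hv0, eq_span_singleton_of_mem_of_finrank_eq_one h hv hv0⟩

theorem LinearIndependent.finrank_span_pair {x y : E} (h : LinearIndependent K ![x, y]) :
    Module.finrank K (span K {x, y}) = 2 := by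
  rw [← range_cons_cons_empty, finrank_span_eq_card h, Fintype.card_fin]

theorem Submodule.eq_span_pair_of_finrank_eq_two [FiniteDimensional K E] {W : Submodule K E}
    (h : Module.finrank K W = 2) {x y : E} (hx : x ∈ W) (hy : y ∈ W)
    (hxy : LinearIndependent K ![x, y]) : W = span K {x, y} := by
  refine (eq_of_le_of_finrank_le (span_le.mpr (Set.pair_subset hx hy)) ?_).symm
  rw [h, hxy.finrank_span_pair]

theorem LinearIndependent.pair_of_notMem {U : Submodule K E} {x y : E} (hx : x ∉ U)
    (hy : y ∈ U) (hy0 : y ≠ 0) : LinearIndependent K ![x, y] := by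
  refine LinearIndependent.pair_iff.mpr fun s t hst => ?_
  obtain rfl | hs := eq_or_ne s 0
  · simp_all
  · refine absurd ?_ hx
    rw [← inv_smul_smul₀ hs x, eq_neg_of_add_eq_zero_left hst]
    exact U.smul_mem _ (U.neg_mem (U.smul_mem t hy))

theorem Submodule.span_pair_add_right (x y : E) : span K {x + y, y} = span K {x, y} := by
  refine le_antisymm (span_le.mpr (Set.pair_subset ?_ ?_)) (span_le.mpr (Set.pair_subset ?_ ?_))
  · exact mem_span_pair.mpr ⟨1, 1, by simp⟩
  · exact mem_span_pair.mpr ⟨0, 1, by simp⟩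
  · exact mem_span_pair.mpr ⟨1, -1, by simp⟩
  · exact mem_span_pair.mpr ⟨0, 1, by simp⟩

theorem Submodule.map_span_singleton_of_eq_smul {f : E →ₗ[K] E'} {x : E} {x' : E'} {k : K}
    (hk : k ≠ 0) (hx : f x = k • x') : (K ∙ x).map f = K ∙ x' := by
  rw [map_span, Set.image_singleton, hx, span_singleton_smul_eq hk.isUnit]

theorem Submodule.map_span_pair_of_eq_smul {f : E →ₗ[K] E'} {x y : E} {x' y' : E'} {k l : K}
    (hk : k ≠ 0) (hl : l ≠ 0) (hx : f x = k • x') (hy : f y = l • y') :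
    (span K {x, y}).map f = span K {x', y'} := by
  rw [map_span, Set.image_pair, hx, hy, span_insert, span_insert,
    span_singleton_smul_eq hk.isUnit, span_singleton_smul_eq hl.isUnit]

end LinearAlgebra

section GeneralLinearGroup

variable {K ι : Type*} [Field K] [Fintype ι] [DecidableEq ι]

theorem Matrix.exists_GL_mulVec_eq_single {v : ι → ι → K} (hv : LinearIndependent K v) :
    ∃ g : GL ι K, ∀ i, (g : Matrix ι ι K) *ᵥ v i = Pi.single i 1 := by
  let B := basisOfLinearIndependentOfCardEqFinrank' v hv (Module.finrank_pi K).symm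
  let := B.invertibleToMatrix (Pi.basisFun K ι)
  refine ⟨unitOfInvertible (B.toMatrix (Pi.basisFun K ι)), fun i => ?_⟩
  have hB : B i = v i := by simp [B, basisOfLinearIndependentOfCardEqFinrank']
  calc (unitOfInvertible (B.toMatrix (Pi.basisFun K ι)) : Matrix ι ι K) *ᵥ v i
      = B.toMatrix (Pi.basisFun K ι) *ᵥ (Pi.basisFun K ι).repr (v i) := by
        congr 1
    _ = B.repr (B i) := by rw [Module.Basis.toMatrix_mulVec_repr, hB]
    _ = Pi.single i 1 := by rw [B.repr_self, Finsupp.single_eq_pi_single]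

theorem Matrix.exists_GL_coe_eq_diagonal {s : ι → K} (hs : ∀ i, s i ≠ 0) :
    ∃ g : GL ι K, (g : Matrix ι ι K) = diagonal s :=
  ⟨(isUnit_diagonal.mpr (Pi.isUnit_iff.mpr fun i => (hs i).isUnit)).unit, rfl⟩

theorem Matrix.GeneralLinearGroup.injective_mulVecLin (g : GL ι K) :
    Function.Injective (g : Matrix ι ι K).mulVecLin :=
  mulVec_injective_of_isUnit g.isUnit

end GeneralLinearGroup

theorem IsFlag.map {V W : Submodule ℝ (Fin 3 → ℝ)} (h : IsFlag V W)
    {f : (Fin 3 → ℝ) →ₗ[ℝ] (Fin 3 → ℝ)} (hf : Function.Injective f) :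
    IsFlag (V.map f) (W.map f) :=
  ⟨(V.equivMapOfInjective f hf).finrank_eq.symm.trans h.1,
    (W.equivMapOfInjective f hf).finrank_eq.symm.trans h.2.1, map_mono h.2.2⟩

theorem TransverseFlags.map {V W V' W' : Submodule ℝ (Fin 3 → ℝ)}
    (h : TransverseFlags V W V' W') {f : (Fin 3 → ℝ) →ₗ[ℝ] (Fin 3 → ℝ)}
    (hf : Function.Injective f) :
    TransverseFlags (V.map f) (W.map f) (V'.map f) (W'.map f) := by
  simpa only [TransverseFlags, map_le_map_iff_of_injective hf] using h

local notation "e₁" => (![1, 0, 0] : Fin 3 → ℝ)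
local notation "e₂" => (![0, 1, 0] : Fin 3 → ℝ)
local notation "e₃" => (![0, 0, 1] : Fin 3 → ℝ)

theorem exists_GL_map_eq_standard_flags {V₀ W₀ V₁ W₁ : Submodule ℝ (Fin 3 → ℝ)}
    (hF₀ : IsFlag V₀ W₀) (hF₁ : IsFlag V₁ W₁) (h : TransverseFlags V₀ W₀ V₁ W₁) :
    ∃ g : GL (Fin 3) ℝ,
      map (g : Matrix (Fin 3) (Fin 3) ℝ).mulVecLin V₀ = span ℝ {e₁} ∧
      map (g : Matrix (Fin 3) (Fin 3) ℝ).mulVecLin W₀ = span ℝ {e₁, e₂} ∧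
      map (g : Matrix (Fin 3) (Fin 3) ℝ).mulVecLin V₁ = span ℝ {e₃} ∧
      map (g : Matrix (Fin 3) (Fin 3) ℝ).mulVecLin W₁ = span ℝ {e₂, e₃} := by
  obtain ⟨v₀, -, rfl⟩ := exists_eq_span_singleton_of_finrank_eq_one hF₀.1
  obtain ⟨v₁, -, rfl⟩ := exists_eq_span_singleton_of_finrank_eq_one hF₁.1
  obtain ⟨u, ⟨huW₀, huW₁⟩, hu⟩ :=
    exists_mem_inf_ne_zero_of_finrank_lt_add (W₁ := W₀) (W₂ := W₁) (by simp [hF₀.2.1, hF₁.2.1])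
  have hv₀W₀ : v₀ ∈ W₀ := (span_singleton_le_iff_mem _ _).mp hF₀.2.2
  have hv₁W₁ : v₁ ∈ W₁ := (span_singleton_le_iff_mem _ _).mp hF₁.2.2
  have hv₀W₁ : v₀ ∉ W₁ := fun h' => h.1 ((span_singleton_le_iff_mem _ _).mpr h')
  have hv₁W₀ : v₁ ∉ W₀ := fun h' => h.2 ((span_singleton_le_iff_mem _ _).mpr h')
  have huv₁ : LinearIndependent ℝ ![u, v₁] :=
    LinearIndependent.pair_symm_iff.mp (.pair_of_notMem hv₁W₀ huW₀ hu)
  have hW₀ : W₀ = span ℝ {v₀, u} :=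
    eq_span_pair_of_finrank_eq_two hF₀.2.1 hv₀W₀ huW₀ (.pair_of_notMem hv₀W₁ huW₁ hu)
  have hW₁ : W₁ = span ℝ {u, v₁} := eq_span_pair_of_finrank_eq_two hF₁.2.1 huW₁ hv₁W₁ huv₁
  have hind : LinearIndependent ℝ ![v₀, u, v₁] :=
    linearIndependent_finCons.mpr ⟨huv₁, by rwa [range_cons_cons_empty, ← hW₁]⟩
  obtain ⟨g, hg⟩ := exists_GL_mulVec_eq_single hind
  have hg₀ : (g : Matrix (Fin 3) (Fin 3) ℝ) *ᵥ v₀ = e₁ :=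
    (hg 0).trans (by ext i; fin_cases i <;> rfl)
  have hg₁ : (g : Matrix (Fin 3) (Fin 3) ℝ) *ᵥ u = e₂ :=
    (hg 1).trans (by ext i; fin_cases i <;> rfl)
  have hg₂ : (g : Matrix (Fin 3) (Fin 3) ℝ) *ᵥ v₁ = e₃ :=
    (hg 2).trans (by ext i; fin_cases i <;> rfl)
  refine ⟨g, ?_, ?_, ?_, ?_⟩ <;>
    simp only [hW₀, hW₁, map_span, Set.image_singleton, Set.image_pair, mulVecLin_apply,
      hg₀, hg₁, hg₂]

theorem mem_span_e₁_e₂ {v : Fin 3 → ℝ} : v ∈ span ℝ {e₁, e₂} ↔ v 2 = 0 := by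
  rw [mem_span_pair]
  refine ⟨fun ⟨a, b, h⟩ => by simp [← h], fun h => ⟨v 0, v 1, ?_⟩⟩
  ext i; fin_cases i <;> simp [h]

theorem mem_span_e₂_e₃ {v : Fin 3 → ℝ} : v ∈ span ℝ {e₂, e₃} ↔ v 0 = 0 := by
  rw [mem_span_pair]
  refine ⟨fun ⟨a, b, h⟩ => by simp [← h], fun h => ⟨v 1, v 2, ?_⟩⟩
  ext i; fin_cases i <;> simp [h]

theorem finrank_span_e₂_e₃ : Module.finrank ℝ (span ℝ {e₂, e₃}) = 2 :=
  LinearIndependent.finrank_span_pair (.pair_of_notMem (U := span ℝ {e₃})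
    (by simp [mem_span_singleton]) (mem_span_singleton_self _) (by simp))

theorem exists_coords_of_transverse_standard_flags {V W : Submodule ℝ (Fin 3 → ℝ)}
    (hF : IsFlag V W) (h₀ : TransverseFlags (span ℝ {e₁}) (span ℝ {e₁, e₂}) V W)
    (h₁ : TransverseFlags (span ℝ {e₃}) (span ℝ {e₂, e₃}) V W) :
    ∃ a b c e f : ℝ, a ≠ 0 ∧ c ≠ 0 ∧ e ≠ 0 ∧ b * f - c * e ≠ 0 ∧
      V = span ℝ {![a, b, c]} ∧ W = span ℝ {![a, b, c], ![0, e, f]} := by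
  obtain ⟨w, -, rfl⟩ := exists_eq_span_singleton_of_finrank_eq_one hF.1
  have hwW : w ∈ W := (span_singleton_le_iff_mem _ _).mp hF.2.2
  have hw₀ : w 0 ≠ 0 := fun h =>
    h₁.2 ((span_singleton_le_iff_mem _ _).mpr (mem_span_e₂_e₃.mpr h))
  have hw₂ : w 2 ≠ 0 := fun h =>
    h₀.2 ((span_singleton_le_iff_mem _ _).mpr (mem_span_e₁_e₂.mpr h))
  obtain ⟨w', ⟨hw'W, hw'₀⟩, hw'⟩ := exists_mem_inf_ne_zero_of_finrank_lt_add
    (W₁ := W) (W₂ := span ℝ {e₂, e₃}) (by simp [hF.2.1, finrank_span_e₂_e₃])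
  replace hw'₀ : w' 0 = 0 := mem_span_e₂_e₃.mp hw'₀
  have hW : W = span ℝ {w, w'} := eq_span_pair_of_finrank_eq_two hF.2.1 hwW hw'W
    (.pair_of_notMem (mem_span_e₂_e₃.not.mpr hw₀) (mem_span_e₂_e₃.mpr hw'₀) hw')
  have he : w' 1 ≠ 0 := by
    intro h
    have hw'₂ : w' 2 ≠ 0 := fun h₂ => hw' (by ext i; fin_cases i <;> simp [*])
    refine h₁.1 ((span_singleton_le_iff_mem _ _).mpr ?_)
    rwa [← W.smul_mem_iff hw'₂, show w' 2 • e₃ = w' by ext i; fin_cases i <;> simp [*]]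
  have hbf : w 1 * w' 2 - w 2 * w' 1 ≠ 0 := by
    intro h
    refine h₀.1 ((span_singleton_le_iff_mem _ _).mpr ?_)
    rw [← W.smul_mem_iff (mul_ne_zero hw₀ he), show (w 0 * w' 1) • e₁ = w' 1 • w - w 1 • w' by
      ext i; fin_cases i <;> simp [hw'₀] <;> linarith]
    exact W.sub_mem (W.smul_mem _ hwW) (W.smul_mem _ hw'W)
  have hw : w = ![w 0, w 1, w 2] := by ext i; fin_cases i <;> rfl
  have hw' : w' = ![0, w' 1, w' 2] := by ext i; fin_cases i <;> simp [hw'₀]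
  exact ⟨w 0, w 1, w 2, w' 1, w' 2, hw₀, hw₂, he, hbf, by rw [← hw], by rw [hW, ← hw, ← hw']⟩

theorem planeQ_eq_span (X : ℝ) : planeQ X = span ℝ {![1, -1, 1], ![0, X, -(1 + X)]} := by
  ext v
  simp only [planeQ, LinearMap.mem_ker, LinearMap.add_apply, LinearMap.smul_apply,
    LinearMap.proj_apply, smul_eq_mul, mem_span_pair]
  constructor
  · intro h
    refine ⟨v 0, -(v 1 + v 2), ?_⟩
    ext i; fin_cases i <;> simp <;> linarith
  · rintro ⟨a, b, rfl⟩
    simp; ring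

theorem planeP_eq_span : planeP = span ℝ {![1, 0, 1], ![0, 1, 1]} := by
  ext v
  simp only [planeP, LinearMap.mem_ker, LinearMap.add_apply, LinearMap.sub_apply,
    LinearMap.proj_apply, mem_span_pair]
  constructor
  · intro h
    refine ⟨v 0, v 1, ?_⟩
    ext i; fin_cases i <;> simp; linarith
  · rintro ⟨a, b, rfl⟩
    simp

def IsNormalFormFlag (V W : Submodule ℝ (Fin 3 → ℝ)) : Prop :=
  (∃ X : ℝ, X ≠ 0 ∧ X ≠ -1 ∧ V = span ℝ {![1, -1, 1]} ∧ W = planeQ X) ∨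
    (V = span ℝ {![1, 0, 1]} ∧ W = planeP) ∨
    (V = span ℝ {![1, 1, 1]} ∧ W = span ℝ {![1, 0, 1], e₂}) ∨
    (V = span ℝ {![1, 0, 1]} ∧ W = span ℝ {![1, 0, 1], e₂})

theorem map_diagonal_standard_flags {s : Fin 3 → ℝ} (hs : ∀ i, s i ≠ 0) :
    map (diagonal s).mulVecLin (span ℝ {e₁}) = span ℝ {e₁} ∧
      map (diagonal s).mulVecLin (span ℝ {e₁, e₂}) = span ℝ {e₁, e₂} ∧
      map (diagonal s).mulVecLin (span ℝ {e₃}) = span ℝ {e₃} ∧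
      map (diagonal s).mulVecLin (span ℝ {e₂, e₃}) = span ℝ {e₂, e₃} := by
  have h₁ : (diagonal s).mulVecLin e₁ = s 0 • e₁ := by
    ext i; fin_cases i <;> simp [mulVec_diagonal]
  have h₂ : (diagonal s).mulVecLin e₂ = s 1 • e₂ := by
    ext i; fin_cases i <;> simp [mulVec_diagonal]
  have h₃ : (diagonal s).mulVecLin e₃ = s 2 • e₃ := by
    ext i; fin_cases i <;> simp [mulVec_diagonal]
  exact ⟨map_span_singleton_of_eq_smul (hs 0) h₁, map_span_pair_of_eq_smul (hs 0) (hs 1) h₁ h₂,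
    map_span_singleton_of_eq_smul (hs 2) h₃, map_span_pair_of_eq_smul (hs 1) (hs 2) h₂ h₃⟩

theorem exists_diagonal_isNormalFormFlag {a b c e f : ℝ} (ha : a ≠ 0) (hc : c ≠ 0) (he : e ≠ 0)
    (hbf : b * f - c * e ≠ 0) :
    ∃ s : Fin 3 → ℝ, (∀ i, s i ≠ 0) ∧
      IsNormalFormFlag (map (diagonal s).mulVecLin (span ℝ {![a, b, c]}))
        (map (diagonal s).mulVecLin (span ℝ {![a, b, c], ![0, e, f]})) := by
  rcases eq_or_ne b 0 with rfl | hb <;> rcases eq_or_ne f 0 with rfl | hf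
  · refine ⟨![a⁻¹, 1, c⁻¹], by simp [Fin.forall_fin_succ, ha, hc],
      .inr <| .inr <| .inr ⟨map_span_singleton_of_eq_smul one_ne_zero ?_,
        map_span_pair_of_eq_smul one_ne_zero he ?_ ?_⟩⟩ <;>
    ext i <;> fin_cases i <;> simp [mulVec_diagonal, ha, hc]
  · refine ⟨![a⁻¹, f / (c * e), c⁻¹], by simp [Fin.forall_fin_succ, ha, hc, he, hf],
      .inr <| .inl ⟨map_span_singleton_of_eq_smul one_ne_zero ?_, planeP_eq_span ▸
        map_span_pair_of_eq_smul one_ne_zero (div_ne_zero hf hc) ?_ ?_⟩⟩ <;>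
    ext i <;> fin_cases i <;> simp [mulVec_diagonal, ha, hc] <;> field_simp
  · have hW : span ℝ {![1, 0, 1], e₂} = span ℝ {![1, 1, 1], e₂} := by
      rw [← span_pair_add_right ![1, 0, 1] e₂]; norm_num
    refine ⟨![a⁻¹, b⁻¹, c⁻¹], by simp [Fin.forall_fin_succ, ha, hb, hc],
      .inr <| .inr <| .inl ⟨map_span_singleton_of_eq_smul one_ne_zero ?_, hW ▸
        map_span_pair_of_eq_smul one_ne_zero (div_ne_zero he hb) ?_ ?_⟩⟩ <;>
    ext i <;> fin_cases i <;> simp [mulVec_diagonal, ha, hb, hc, div_eq_inv_mul]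
  · set D := b * f - c * e with hD
    clear_value D
    have hX : c * e / D ≠ -1 := by
      rw [Ne, div_eq_iff hbf]
      exact fun h => mul_ne_zero hb hf (by linear_combination h - hD)
    -- `(0, e, f)` goes to `(0, -e/b, f/c) = -(D/(bc)) • (0, X, -(1 + X))` with `X = ce/D`
    refine ⟨![a⁻¹, -b⁻¹, c⁻¹], by simp [Fin.forall_fin_succ, ha, hb, hc],
      .inl ⟨c * e / D, div_ne_zero (mul_ne_zero hc he) hbf, hX,
        map_span_singleton_of_eq_smul one_ne_zero ?_, planeQ_eq_span _ ▸
        map_span_pair_of_eq_smul one_ne_zero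
          (div_ne_zero (neg_ne_zero.mpr hbf) (mul_ne_zero hb hc)) ?_ ?_⟩⟩ <;>
      ext i <;> fin_cases i <;> simp [mulVec_diagonal, ha, hb, hc]
    · field_simp
    · field_simp
      linear_combination -hD

theorem exists_GL_fixing_standard_flags_isNormalFormFlag {V W : Submodule ℝ (Fin 3 → ℝ)}
    (hF : IsFlag V W) (h₀ : TransverseFlags (span ℝ {e₁}) (span ℝ {e₁, e₂}) V W)
    (h₁ : TransverseFlags (span ℝ {e₃}) (span ℝ {e₂, e₃}) V W) :
    ∃ d : GL (Fin 3) ℝ,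
      map (d : Matrix (Fin 3) (Fin 3) ℝ).mulVecLin (span ℝ {e₁}) = span ℝ {e₁} ∧
      map (d : Matrix (Fin 3) (Fin 3) ℝ).mulVecLin (span ℝ {e₁, e₂}) = span ℝ {e₁, e₂} ∧
      map (d : Matrix (Fin 3) (Fin 3) ℝ).mulVecLin (span ℝ {e₃}) = span ℝ {e₃} ∧
      map (d : Matrix (Fin 3) (Fin 3) ℝ).mulVecLin (span ℝ {e₂, e₃}) = span ℝ {e₂, e₃} ∧
      IsNormalFormFlag (map (d : Matrix (Fin 3) (Fin 3) ℝ).mulVecLin V)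
        (map (d : Matrix (Fin 3) (Fin 3) ℝ).mulVecLin W) := by
  obtain ⟨a, b, c, e, f, ha, hc, he, hbf, rfl, rfl⟩ :=
    exists_coords_of_transverse_standard_flags hF h₀ h₁
  obtain ⟨s, hs, hN⟩ := exists_diagonal_isNormalFormFlag ha hc he hbf
  obtain ⟨h₁, h₁₂, h₃, h₂₃⟩ := map_diagonal_standard_flags hs
  obtain ⟨d, hd⟩ := exists_GL_coe_eq_diagonal hs
  exact ⟨d, hd ▸ ⟨h₁, h₁₂, h₃, h₂₃, hN⟩⟩

/-- any triple of pairwise transverse flags in `ℝ³` can be mapped by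
some `g ∈ GL(3,ℝ)` to `(span e₁, span{e₁,e₂})`, `(span e₃, span{e₂,e₃})` and one of
the four listed normal forms for the third flag. -/
theorem stmt10 (V₀ W₀ V₁ W₁ V₂ W₂ : Submodule ℝ (Fin 3 → ℝ))
    (hF0 : IsFlag V₀ W₀) (hF1 : IsFlag V₁ W₁) (hF2 : IsFlag V₂ W₂)
    (h01 : TransverseFlags V₀ W₀ V₁ W₁)
    (h02 : TransverseFlags V₀ W₀ V₂ W₂)
    (h12 : TransverseFlags V₁ W₁ V₂ W₂) :
    ∃ g : GL (Fin 3) ℝ,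
      Submodule.map ((g : Matrix (Fin 3) (Fin 3) ℝ)).mulVecLin V₀ = span ℝ {![1,0,0]} ∧
      Submodule.map ((g : Matrix (Fin 3) (Fin 3) ℝ)).mulVecLin W₀
        = span ℝ {![1,0,0], ![0,1,0]} ∧
      Submodule.map ((g : Matrix (Fin 3) (Fin 3) ℝ)).mulVecLin V₁ = span ℝ {![0,0,1]} ∧
      Submodule.map ((g : Matrix (Fin 3) (Fin 3) ℝ)).mulVecLin W₁
        = span ℝ {![0,1,0], ![0,0,1]} ∧
      ((∃ X : ℝ, X ≠ 0 ∧ X ≠ -1 ∧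
          Submodule.map ((g : Matrix (Fin 3) (Fin 3) ℝ)).mulVecLin V₂
            = span ℝ {![1,-1,1]} ∧
          Submodule.map ((g : Matrix (Fin 3) (Fin 3) ℝ)).mulVecLin W₂ = planeQ X) ∨
        (Submodule.map ((g : Matrix (Fin 3) (Fin 3) ℝ)).mulVecLin V₂
            = span ℝ {![1,0,1]} ∧
          Submodule.map ((g : Matrix (Fin 3) (Fin 3) ℝ)).mulVecLin W₂ = planeP) ∨
        (Submodule.map ((g : Matrix (Fin 3) (Fin 3) ℝ)).mulVecLin V₂
            = span ℝ {![1,1,1]} ∧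
          Submodule.map ((g : Matrix (Fin 3) (Fin 3) ℝ)).mulVecLin W₂
            = span ℝ {![1,0,1], ![0,1,0]}) ∨
        (Submodule.map ((g : Matrix (Fin 3) (Fin 3) ℝ)).mulVecLin V₂
            = span ℝ {![1,0,1]} ∧
          Submodule.map ((g : Matrix (Fin 3) (Fin 3) ℝ)).mulVecLin W₂
            = span ℝ {![1,0,1], ![0,1,0]})) := by
  obtain ⟨g, hV₀, hW₀, hV₁, hW₁⟩ := exists_GL_map_eq_standard_flags hF0 hF1 h01
  have hg := g.injective_mulVecLin
  obtain ⟨d, hd₁, hd₁₂, hd₃, hd₂₃, hd⟩ := exists_GL_fixing_standard_flags_isNormalFormFlag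
    (hF2.map hg) (hV₀ ▸ hW₀ ▸ h02.map hg) (hV₁ ▸ hW₁ ▸ h12.map hg)
  refine ⟨d * g, ?_⟩
  simp only [Units.val_mul, mulVecLin_mul, map_comp, hV₀, hW₀, hV₁, hW₁]
  exact ⟨hd₁, hd₁₂, hd₃, hd₂₃, hd⟩
end

section
/- Let B ∈ SL(3,ℝ) with B ≠ I stabilize each of three pairwise transverse flags (V₀,W₀), (V₁,W₁), (V₂,W₂) in ℝ³. Then there is a 2-dimensional subspace W of ℝ³ containing V₀, V₁ and V₂, there is a 1-dimensional subspace V of ℝ³ contained in W₀ ∩ W₁ ∩ W₂, and B is conjugate in GL(3,ℝ) to diag(λ, λ⁻², λ) for some real λ with λ ≠ 0 and λ ≠ 1. -/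
/-!
Every line `Vᵢ` is an eigenline of `B`, and so is `W₀ ∩ W₁`, say spanned by `u` with eigenvalue
`μ`. An invariant plane `Wⱼ` leaves `B` acting on the line `ℝ³ / Wⱼ` by a scalar, so any two
eigenlines not in `Wⱼ` share their eigenvalue; applied to `W₀` and `W₁` this gives all `Vᵢ` one
eigenvalue `λ`. Spanning vectors of `V₀`, `W₀ ∩ W₁`, `V₁` form a basis conjugating `B` to
`diag(λ, μ, λ)`; `det B = 1` gives `μ = λ⁻²`, and `B ≠ 1` forces `μ ≠ λ`. Hence the
`λ`-eigenspace is a plane containing every `Vᵢ`, and the quotient argument for `W₂`, with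
`V₀ ⊄ W₂`, puts `u` in `W₂`.
-/
open Matrix Submodule

open Module Module.End

section
variable {K E : Type*} [Field K] [AddCommGroup E] [Module K E]

lemma Submodule.exists_hasEigenvector_of_finrank_eq_one [FiniteDimensional K E] {f : End K E}
    {V : Submodule K E} (hV : finrank K V = 1) (hfV : V.map f ≤ V) :
    ∃ μ v, V = K ∙ v ∧ f.HasEigenvector μ v := by
  obtain ⟨v, rfl⟩ := ((finrank_le_one_iff_isPrincipal V).1 hV.le).principal
  have hv : v ≠ 0 := by
    rintro rfl
    rw [span_zero_singleton, finrank_bot] at hV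
    exact zero_ne_one hV
  obtain ⟨μ, hμ⟩ := mem_span_singleton.1 (hfV (mem_map_of_mem (mem_span_singleton_self v)))
  exact ⟨μ, v, rfl, mem_eigenspace_iff.2 hμ.symm, hv⟩

lemma Submodule.sup_span_singleton_eq_top [FiniteDimensional K E] {W : Submodule K E} {v : E}
    (hW : finrank K W + 1 = finrank K E) (hv : v ∉ W) : W ⊔ K ∙ v = ⊤ := by
  apply eq_top_of_finrank_eq
  have h := finrank_sup_add_finrank_inf_eq W (K ∙ v)
  rw [(disjoint_span_singleton_of_notMem hv).eq_bot, finrank_bot, add_zero,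
    finrank_span_singleton (by rintro rfl; exact hv W.zero_mem)] at h
  omega

lemma Submodule.finrank_inf_add_one_of_not_le [FiniteDimensional K E] {W W' : Submodule K E}
    (hW : finrank K W + 1 = finrank K E) (hW' : ¬ W' ≤ W) :
    finrank K ↥(W ⊓ W') + 1 = finrank K W' := by
  obtain ⟨v, hv', hv⟩ := SetLike.not_le_iff_exists.1 hW'
  have htop : W ⊔ W' = ⊤ := top_unique <| sup_span_singleton_eq_top hW hv ▸
    sup_le_sup_left ((span_singleton_le_iff_mem _ _).2 hv') W
  have h := finrank_sup_add_finrank_inf_eq W W'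
  rw [htop, finrank_top] at h
  omega

lemma Submodule.finrank_eq_two_of_ne_top [FiniteDimensional K E] (hE : finrank K E = 3)
    {S : Submodule K E} (hS : S ≠ ⊤) {x y : E} (hxy : LinearIndependent K ![x, y])
    (hx : x ∈ S) (hy : y ∈ S) : finrank K S = 2 := by
  have hspan : finrank K (span K (Set.range ![x, y])) = 2 := by
    simpa using finrank_span_eq_card hxy
  have h2 : 2 ≤ finrank K S :=
    hspan ▸ finrank_mono (span_le.2 (Set.range_subset_iff.2 (Fin.forall_fin_two.2 ⟨hx, hy⟩)))
  have h3 : finrank K S < 3 := hE ▸ finrank_lt hS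
  omega

lemma Module.End.eq_of_mem_eigenspace_of_notMem [FiniteDimensional K E] {f : End K E}
    {W : Submodule K E} (hW : finrank K W + 1 = finrank K E) (hfW : W.map f ≤ W)
    {v v' : E} {μ μ' : K} (hv : v ∈ f.eigenspace μ) (hv' : v' ∈ f.eigenspace μ')
    (hvW : v ∉ W) (hv'W : v' ∉ W) : μ = μ' := by
  obtain ⟨w, hw, x, hx, rfl⟩ := mem_sup.1 (sup_span_singleton_eq_top hW hvW ▸ mem_top (x := v'))
  obtain ⟨c, rfl⟩ := mem_span_singleton.1 hx
  rw [mem_eigenspace_iff, map_add, map_smul, mem_eigenspace_iff.1 hv] at hv'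
  have hc : c ≠ 0 := by rintro rfl; simp_all
  have hmem : (c * (μ' - μ)) • v ∈ W := by
    have : (c * (μ' - μ)) • v = f w - μ' • w := by linear_combination (norm := module) -hv'
    exact this ▸ sub_mem (hfW (mem_map_of_mem hw)) (smul_mem _ _ hw)
  by_contra hne
  exact hvW ((smul_mem_iff W (mul_ne_zero hc (sub_ne_zero.2 (Ne.symm hne)))).1 hmem)

lemma linearIndependent_finCons_of_notMem {n : ℕ} {x : E} {v : Fin n → E} (W : Submodule K E)
    (hv : LinearIndependent K v) (hvW : ∀ i, v i ∈ W) (hx : x ∉ W) :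
    LinearIndependent K (Fin.cons x v : Fin (n + 1) → E) :=
  linearIndependent_finCons.2 ⟨hv, fun h => hx (span_le.2 (Set.range_subset_iff.2 hvW) h)⟩

lemma linearIndependent_of_mem_inf {W₀ W₁ : Submodule K E} {v₀ u v₁ : E} (hu : u ≠ 0)
    (hu₀₁ : u ∈ W₀ ⊓ W₁) (hv₀ : v₀ ∉ W₁) (hv₁ : v₁ ∈ W₁) (hv₁W₀ : v₁ ∉ W₀) :
    LinearIndependent K ![v₀, u, v₁] := by
  have hu₁ : LinearIndependent K ![u, v₁] := LinearIndependent.pair_symm_iff.1 <|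
    linearIndependent_finCons_of_notMem W₀ (linearIndependent_unique_iff.2 hu)
      (Fin.forall_fin_one.2 hu₀₁.1) hv₁W₀
  exact linearIndependent_finCons_of_notMem W₁ hu₁ (Fin.forall_fin_two.2 ⟨hu₀₁.2, hv₁⟩) hv₀

end

lemma Matrix.exists_conj_eq_diagonal {n K : Type*} [Fintype n] [DecidableEq n] [Field K]
    (A : Matrix n n K) (v : n → n → K) (d : n → K) (hv : LinearIndependent K v)
    (hAv : ∀ i, A *ᵥ v i = d i • v i) :
    ∃ g : GL n K, (g : Matrix n n K) * A * ((g⁻¹ : GL n K) : Matrix n n K) = diagonal d := by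
  set P : Matrix n n K := (of v)ᵀ
  have hP : IsUnit P := linearIndependent_cols_iff_isUnit.1 hv
  have hAP : A * P = P * diagonal d := by
    ext i j
    have h := congrFun (hAv j) i
    simp only [mulVec, dotProduct, Pi.smul_apply, smul_eq_mul] at h
    rw [mul_diagonal, mul_apply]
    simpa [P, mul_comm] using h
  refine ⟨hP.unit⁻¹, ?_⟩
  rw [inv_inv, IsUnit.unit_spec, mul_assoc, hAP, ← mul_assoc, IsUnit.val_inv_mul, one_mul]

lemma Matrix.SpecialLinearGroup.eq_inv_sq_of_conj_eq_diagonal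
    {B : SpecialLinearGroup (Fin 3) ℝ} (hB : B ≠ 1) {g : GL (Fin 3) ℝ} {l μ : ℝ}
    (hg : (g : Matrix (Fin 3) (Fin 3) ℝ) * B.1 * ((g⁻¹ : GL (Fin 3) ℝ) : Matrix (Fin 3) (Fin 3) ℝ)
      = diagonal ![l, μ, l]) :
    l ≠ 0 ∧ μ = (l ^ 2)⁻¹ ∧ μ ≠ l := by
  have hdet : l * μ * l = 1 := by
    have h := congrArg det hg
    rw [det_units_conj, B.2, det_diagonal, Fin.prod_univ_three] at h
    simpa using h.symm
  have hl0 : l ≠ 0 := by rintro rfl; simp at hdet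
  refine ⟨hl0, by field_simp; linear_combination hdet, ?_⟩
  rintro rfl
  have hl1 : μ = 1 := (Odd.pow_inj (n := 3) (by decide)).1 (by linear_combination hdet)
  apply hB
  have h1 : (g : Matrix (Fin 3) (Fin 3) ℝ) * B.1 = g := by
    rw [← Units.mul_inv_eq_one, hg, hl1]
    exact (congrArg diagonal (funext fun i => by fin_cases i <;> rfl)).trans diagonal_one
  exact Subtype.ext ((Units.mul_right_inj g).1 (h1.trans (mul_one _).symm))

lemma transverseFlags_span_singleton_iff {v v' : Fin 3 → ℝ} {W W' : Submodule ℝ (Fin 3 → ℝ)} :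
    TransverseFlags (ℝ ∙ v) W (ℝ ∙ v') W' ↔ v ∉ W' ∧ v' ∉ W := by
  simp only [TransverseFlags, span_singleton_le_iff_mem]

lemma IsFlag.finrank_add_one {V W : Submodule ℝ (Fin 3 → ℝ)} (hF : IsFlag V W) :
    finrank ℝ W + 1 = finrank ℝ (Fin 3 → ℝ) := by
  simp [hF.2.1]

lemma StabilizesFlag.exists_hasEigenvector {M : Matrix (Fin 3) (Fin 3) ℝ}
    {V W : Submodule ℝ (Fin 3 → ℝ)} (hF : IsFlag V W) (hs : StabilizesFlag M V W) :
    ∃ l v, V = ℝ ∙ v ∧ HasEigenvector M.mulVecLin l v :=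
  exists_hasEigenvector_of_finrank_eq_one hF.1 hs.1.le

lemma exists_common_eigenvalue_of_transverseFlags {M : Matrix (Fin 3) (Fin 3) ℝ}
    {V₀ W₀ V₁ W₁ V₂ W₂ : Submodule ℝ (Fin 3 → ℝ)}
    (hF0 : IsFlag V₀ W₀) (hF1 : IsFlag V₁ W₁) (hF2 : IsFlag V₂ W₂)
    (h01 : TransverseFlags V₀ W₀ V₁ W₁) (h02 : TransverseFlags V₀ W₀ V₂ W₂)
    (h12 : TransverseFlags V₁ W₁ V₂ W₂) (hs0 : StabilizesFlag M V₀ W₀)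
    (hs1 : StabilizesFlag M V₁ W₁) (hs2 : StabilizesFlag M V₂ W₂) :
    ∃ l v₀ v₁ v₂, V₀ = ℝ ∙ v₀ ∧ V₁ = ℝ ∙ v₁ ∧ V₂ = ℝ ∙ v₂ ∧ v₀ ∈ eigenspace M.mulVecLin l ∧
      v₁ ∈ eigenspace M.mulVecLin l ∧ v₂ ∈ eigenspace M.mulVecLin l := by
  obtain ⟨l₀, v₀, rfl, hv₀⟩ := hs0.exists_hasEigenvector hF0
  obtain ⟨l₁, v₁, rfl, hv₁⟩ := hs1.exists_hasEigenvector hF1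
  obtain ⟨l₂, v₂, rfl, hv₂⟩ := hs2.exists_hasEigenvector hF2
  rw [transverseFlags_span_singleton_iff] at h01 h02 h12
  obtain rfl := eq_of_mem_eigenspace_of_notMem hF0.finrank_add_one hs0.2.le hv₁.1 hv₂.1 h01.2 h02.2
  obtain rfl := eq_of_mem_eigenspace_of_notMem hF1.finrank_add_one hs1.2.le hv₀.1 hv₂.1 h01.1 h12.2
  exact ⟨l₀, v₀, v₁, v₂, rfl, rfl, rfl, hv₀.1, hv₁.1, hv₂.1⟩

lemma exists_hasEigenvector_mem_inf_of_transverseFlags {M : Matrix (Fin 3) (Fin 3) ℝ}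
    {V₀ W₀ V₁ W₁ : Submodule ℝ (Fin 3 → ℝ)} (hF0 : IsFlag V₀ W₀) (hF1 : IsFlag V₁ W₁)
    (h01 : TransverseFlags V₀ W₀ V₁ W₁) (hs0 : StabilizesFlag M V₀ W₀)
    (hs1 : StabilizesFlag M V₁ W₁) :
    ∃ μ u, HasEigenvector M.mulVecLin μ u ∧ u ∈ W₀ ⊓ W₁ := by
  have hW₁ : ¬ W₁ ≤ W₀ := fun h => h01.2 (hF1.2.2.trans h)
  have hrank : finrank ℝ ↥(W₀ ⊓ W₁) = 1 := by
    have := finrank_inf_add_one_of_not_le hF0.finrank_add_one hW₁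
    rw [hF1.2.1] at this
    omega
  obtain ⟨μ, u, hL, hu⟩ := exists_hasEigenvector_of_finrank_eq_one hrank
    ((map_inf_le _).trans (inf_le_inf hs0.2.le hs1.2.le))
  exact ⟨μ, u, hu, hL ▸ mem_span_singleton_self u⟩

/-- let `B ∈ SL(3,ℝ)`, `B ≠ I`, stabilize three pairwise transverse
flags `(V₀,W₀)`, `(V₁,W₁)`, `(V₂,W₂)`. Then there is a plane `W` containing
`V₀, V₁, V₂`, a line `V` contained in `W₀ ∩ W₁ ∩ W₂`, and `B` is conjugate in
`GL(3,ℝ)` to `diag(λ, λ⁻², λ)` for some `λ ∉ {0, 1}`. -/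
theorem stmt11 (B : Matrix.SpecialLinearGroup (Fin 3) ℝ) (hB : B ≠ 1)
    (V₀ W₀ V₁ W₁ V₂ W₂ : Submodule ℝ (Fin 3 → ℝ))
    (hF0 : IsFlag V₀ W₀) (hF1 : IsFlag V₁ W₁) (hF2 : IsFlag V₂ W₂)
    (h01 : TransverseFlags V₀ W₀ V₁ W₁)
    (h02 : TransverseFlags V₀ W₀ V₂ W₂)
    (h12 : TransverseFlags V₁ W₁ V₂ W₂)
    (hs0 : StabilizesFlag B.1 V₀ W₀)
    (hs1 : StabilizesFlag B.1 V₁ W₁)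
    (hs2 : StabilizesFlag B.1 V₂ W₂) :
    (∃ W : Submodule ℝ (Fin 3 → ℝ), Module.finrank ℝ W = 2 ∧
      V₀ ≤ W ∧ V₁ ≤ W ∧ V₂ ≤ W) ∧
    (∃ V : Submodule ℝ (Fin 3 → ℝ), Module.finrank ℝ V = 1 ∧
      V ≤ W₀ ⊓ W₁ ⊓ W₂) ∧
    (∃ g : GL (Fin 3) ℝ, ∃ l : ℝ, l ≠ 0 ∧ l ≠ 1 ∧
      (g : Matrix (Fin 3) (Fin 3) ℝ) * B.1 * ((g⁻¹ : GL (Fin 3) ℝ) : Matrix (Fin 3) (Fin 3) ℝ)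
        = Matrix.diagonal ![l, (l ^ 2)⁻¹, l]) := by
  obtain ⟨μ, u, hu, hu₀₁⟩ :=
    exists_hasEigenvector_mem_inf_of_transverseFlags hF0 hF1 h01 hs0 hs1
  obtain ⟨l, v₀, v₁, v₂, rfl, rfl, rfl, hv₀, hv₁, hv₂⟩ :=
    exists_common_eigenvalue_of_transverseFlags hF0 hF1 hF2 h01 h02 h12 hs0 hs1 hs2
  rw [transverseFlags_span_singleton_iff] at h01 h02
  have hv₁W₁ : v₁ ∈ W₁ := (span_singleton_le_iff_mem _ _).1 hF1.2.2
  obtain ⟨g, hg⟩ := B.1.exists_conj_eq_diagonal ![v₀, u, v₁] ![l, μ, l]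
    (linearIndependent_of_mem_inf hu.2 hu₀₁ h01.1 hv₁W₁ h01.2) fun i => by
      fin_cases i
      exacts [mem_eigenspace_iff.1 hv₀, hu.apply_eq_smul, mem_eigenspace_iff.1 hv₁]
  obtain ⟨hl0, rfl, hμl⟩ := SpecialLinearGroup.eq_inv_sq_of_conj_eq_diagonal hB hg
  have hu₂ : u ∈ W₂ := by
    by_contra hu₂
    exact hμl (eq_of_mem_eigenspace_of_notMem hF2.finrank_add_one hs2.2.le hu.1 hv₀ hu₂ h02.1)
  have hul : u ∉ eigenspace B.1.mulVecLin l := fun h =>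
    hμl (smul_left_injective ℝ hu.2 (hu.apply_eq_smul.symm.trans (mem_eigenspace_iff.1 h)))
  have hv₁0 : v₁ ≠ 0 := fun h => h01.2 (h ▸ W₀.zero_mem)
  have hv₀₁ : LinearIndependent ℝ ![v₀, v₁] := linearIndependent_finCons_of_notMem W₁
    (linearIndependent_unique_iff.2 hv₁0) (Fin.forall_fin_one.2 hv₁W₁) h01.1
  have hW : finrank ℝ (eigenspace B.1.mulVecLin l) = 2 :=
    finrank_eq_two_of_ne_top (by simp) (fun h => hul (h ▸ mem_top)) hv₀₁ hv₀ hv₁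
  refine ⟨⟨_, hW, ?_⟩, ⟨ℝ ∙ u, finrank_span_singleton hu.2, ?_⟩,
    ⟨g, l, hl0, fun h => hμl (by simp [h]), hg⟩⟩
  · simp only [span_singleton_le_iff_mem]
    exact ⟨hv₀, hv₁, hv₂⟩
  · exact (span_singleton_le_iff_mem _ _).2 ⟨hu₀₁, hu₂⟩
end

section
/- Let Ω be the set of flags (V,W) in ℝ³ such that V ⊄ span{e₁,e₃} and e₂ ∉ W. Then for every A ∈ SL(2,ℝ) and every (V,W) ∈ Ω the flag (ι(A)·V, ι(A)·W) again lies in Ω, and for any two flags F, F' ∈ Ω there exists a unique A ∈ SL(2,ℝ) with (ι(A)·V, ι(A)·W) = F' where F = (V,W); that is, SL(2,ℝ) acting via ι is simply transitive on Ω. -/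
open Matrix Submodule

/-- The completely reducible embedding `ι : SL(2,ℝ) → SL(3,ℝ)`,
sending `[[a,b],[c,d]]` to the matrix with rows `(a,0,b),(0,1,0),(c,0,d)`. -/
noncomputable def iota (A : Matrix.SpecialLinearGroup (Fin 2) ℝ) :
    Matrix.SpecialLinearGroup (Fin 3) ℝ :=
  ⟨!![A.1 0 0, 0, A.1 0 1; 0, 1, 0; A.1 1 0, 0, A.1 1 1], by
    have h := A.2
    rw [Matrix.det_fin_two] at h
    rw [Matrix.det_fin_three]
    simp
    linarith⟩

/-- Membership in `Ω`: a flag `(V,W)` in `ℝ³` with `V ⊄ span{e₁,e₃}` and `e₂ ∉ W`. -/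
def MemOmega (V W : Submodule ℝ (Fin 3 → ℝ)) : Prop :=
  Module.finrank ℝ V = 1 ∧ Module.finrank ℝ W = 2 ∧ V ≤ W ∧
    ¬ V ≤ span ℝ {![1,0,0], ![0,0,1]} ∧ ![0,1,0] ∉ W

/-! Write vectors of `ℝ³` as `a • e₂ + (u₀, 0, u₁)`; then `ι(A)` acts by `(a, u) ↦ (a, A u)`.
The line of a flag in `Ω` has a unique generator `e₂ + (p₀, 0, p₁)`, and its plane meets
`span {e₁, e₃}` in a line `ℝ • (q₀, 0, q₁)`. The condition `e₂ ∉ W` says exactly that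
`det [p q] ≠ 0`, and rescaling `q` makes this determinant `1`. This identifies `Ω` with
`SL(2,ℝ)`, and the action through `ι` becomes left multiplication, which is simply transitive. -/

namespace OmegaFlag

local notation "e₂" => (![0, 1, 0] : Fin 3 → ℝ)

def embPlane : (Fin 2 → ℝ) →ₗ[ℝ] (Fin 3 → ℝ) where
  toFun u := ![u 0, 0, u 1]
  map_add' u v := by ext i; fin_cases i <;> simp
  map_smul' c u := by ext i; fin_cases i <;> simp

def embAffine (p : Fin 2 → ℝ) : Fin 3 → ℝ := e₂ + embPlane p

@[simp]
lemma embPlane_apply_one (u : Fin 2 → ℝ) : embPlane u 1 = 0 := rfl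

lemma embPlane_injective : Function.Injective embPlane := fun u v h => by
  ext i
  fin_cases i
  · exact congrFun h 0
  · exact congrFun h 2

lemma smul_e₂_add_embPlane_inj {a b : ℝ} {u v : Fin 2 → ℝ}
    (h : a • e₂ + embPlane u = b • e₂ + embPlane v) : a = b ∧ u = v := by
  have hab : a = b := by simpa using congrFun h 1
  subst hab
  exact ⟨rfl, embPlane_injective (add_left_cancel h)⟩

lemma eq_smul_e₂_add_embPlane (x : Fin 3 → ℝ) : x = x 1 • e₂ + embPlane ![x 0, x 2] := by
  ext i; fin_cases i <;> simp [embPlane]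

lemma mem_span_e₁_e₃_iff {x : Fin 3 → ℝ} :
    x ∈ span ℝ {![1, 0, 0], ![0, 0, 1]} ↔ x 1 = 0 := by
  rw [mem_span_pair]
  refine ⟨fun ⟨a, b, hx⟩ => by simp [← hx], fun hx => ⟨x 0, x 2, ?_⟩⟩
  ext i; fin_cases i <;> simp [hx]

lemma smul_embAffine_add_smul_embPlane (B : Matrix (Fin 2) (Fin 2) ℝ) (a b : ℝ) :
    a • embAffine (B *ᵥ ![1, 0]) + b • embPlane (B *ᵥ ![0, 1]) =
      a • e₂ + embPlane (B *ᵥ ![a, b]) := by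
  have : ![a, b] = a • ![1, 0] + b • ![0, 1] := by ext i; fin_cases i <;> simp
  rw [this, mulVec_add, mulVec_smul, mulVec_smul, map_add, map_smul, map_smul, embAffine]
  module

def flagLine (B : Matrix (Fin 2) (Fin 2) ℝ) : Submodule ℝ (Fin 3 → ℝ) :=
  span ℝ {embAffine (B *ᵥ ![1, 0])}

def flagPlane (B : Matrix (Fin 2) (Fin 2) ℝ) : Submodule ℝ (Fin 3 → ℝ) :=
  span ℝ {embAffine (B *ᵥ ![1, 0]), embPlane (B *ᵥ ![0, 1])}

lemma mem_flagPlane_iff {B : Matrix (Fin 2) (Fin 2) ℝ} {x : Fin 3 → ℝ} :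
    x ∈ flagPlane B ↔ ∃ a b : ℝ, a • e₂ + embPlane (B *ᵥ ![a, b]) = x := by
  simp only [flagPlane, mem_span_pair, smul_embAffine_add_smul_embPlane]

lemma eq_zero_of_smul_e₂_add_embPlane_eq_smul_e₂ {B : Matrix (Fin 2) (Fin 2) ℝ} (hB : B.det ≠ 0)
    {a b c : ℝ} (h : a • e₂ + embPlane (B *ᵥ ![a, b]) = c • e₂) : a = 0 ∧ b = 0 ∧ c = 0 := by
  rw [← add_zero (c • e₂), ← map_zero embPlane] at h
  obtain ⟨rfl, hv⟩ := smul_e₂_add_embPlane_inj h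
  have hab := eq_zero_of_mulVec_eq_zero hB hv
  have ha : a = 0 := by simpa using congrFun hab 0
  exact ⟨ha, by simpa using congrFun hab 1, ha⟩

theorem memOmega_flag {B : Matrix (Fin 2) (Fin 2) ℝ} (hB : B.det ≠ 0) :
    MemOmega (flagLine B) (flagPlane B) := by
  refine ⟨finrank_span_singleton ?_, ?_, span_mono (by simp), fun h => ?_, fun h => ?_⟩
  · intro h
    simpa [embAffine] using congrFun h 1
  · have hli : LinearIndependent ℝ ![embAffine (B *ᵥ ![1, 0]), embPlane (B *ᵥ ![0, 1])] := by
      refine LinearIndependent.pair_iff.2 fun a b hab => ?_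
      rw [smul_embAffine_add_smul_embPlane, ← zero_smul ℝ e₂] at hab
      exact (eq_zero_of_smul_e₂_add_embPlane_eq_smul_e₂ hB hab).imp_right And.left
    have := finrank_span_eq_card hli
    rwa [range_cons_cons_empty, Fintype.card_fin] at this
  · have := mem_span_e₁_e₃_iff.1 (h (mem_span_singleton_self _))
    simp [embAffine] at this
  · obtain ⟨a, b, hab⟩ := mem_flagPlane_iff.1 h
    exact one_ne_zero
      (eq_zero_of_smul_e₂_add_embPlane_eq_smul_e₂ hB (hab.trans (one_smul ℝ e₂).symm)).2.2

lemma iota_mulVec_embPlane (A : Matrix.SpecialLinearGroup (Fin 2) ℝ) (u : Fin 2 → ℝ) :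
    (iota A).1 *ᵥ embPlane u = embPlane (A.1 *ᵥ u) := by
  ext i; fin_cases i <;> simp [iota, embPlane, mulVec, dotProduct, Fin.sum_univ_three]

lemma iota_mulVec_embAffine (A : Matrix.SpecialLinearGroup (Fin 2) ℝ) (p : Fin 2 → ℝ) :
    (iota A).1 *ᵥ embAffine p = embAffine (A.1 *ᵥ p) := by
  have : (iota A).1 *ᵥ e₂ = e₂ := by
    ext i; fin_cases i <;> simp [iota, mulVec, dotProduct, Fin.sum_univ_three]
  rw [embAffine, mulVec_add, this, iota_mulVec_embPlane, embAffine]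

lemma map_iota_flagLine (A : Matrix.SpecialLinearGroup (Fin 2) ℝ) (B : Matrix (Fin 2) (Fin 2) ℝ) :
    map (iota A).1.mulVecLin (flagLine B) = flagLine (A.1 * B) := by
  rw [flagLine, map_span, Set.image_singleton, mulVecLin_apply, iota_mulVec_embAffine,
    mulVec_mulVec, flagLine]

lemma map_iota_flagPlane (A : Matrix.SpecialLinearGroup (Fin 2) ℝ) (B : Matrix (Fin 2) (Fin 2) ℝ) :
    map (iota A).1.mulVecLin (flagPlane B) = flagPlane (A.1 * B) := by
  rw [flagPlane, map_span, Set.image_pair, mulVecLin_apply, mulVecLin_apply,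
    iota_mulVec_embAffine, iota_mulVec_embPlane, mulVec_mulVec, mulVec_mulVec, flagPlane]

lemma mulVec_one_zero_eq_of_flagLine_eq {B B' : Matrix (Fin 2) (Fin 2) ℝ} (h : flagLine B = flagLine B') :
    B *ᵥ ![1, 0] = B' *ᵥ ![1, 0] := by
  have hmem : embAffine (B *ᵥ ![1, 0]) ∈ flagLine B' := h ▸ mem_span_singleton_self _
  obtain ⟨c, hc⟩ := mem_span_singleton.1 hmem
  rw [embAffine, embAffine, smul_add, ← map_smul, ← one_smul ℝ e₂, smul_smul, mul_one] at hc
  obtain ⟨rfl, hc⟩ := smul_e₂_add_embPlane_inj hc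
  rwa [one_smul, eq_comm] at hc

lemma exists_mulVec_zero_one_eq_of_flagPlane_eq {B B' : Matrix (Fin 2) (Fin 2) ℝ}
    (h : flagPlane B = flagPlane B') : ∃ b : ℝ, B *ᵥ ![0, 1] = B' *ᵥ ![0, b] := by
  have hmem : embPlane (B *ᵥ ![0, 1]) ∈ flagPlane B' := h ▸ subset_span (by simp)
  obtain ⟨a, b, hab⟩ := mem_flagPlane_iff.1 hmem
  obtain ⟨rfl, hab⟩ := smul_e₂_add_embPlane_inj (b := 0) (hab.trans (by rw [zero_smul, zero_add]))
  exact ⟨b, hab.symm⟩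

theorem eq_of_flag_eq {B B' : Matrix (Fin 2) (Fin 2) ℝ} (hdet : B.det = B'.det) (hB' : B'.det ≠ 0)
    (hL : flagLine B = flagLine B') (hP : flagPlane B = flagPlane B') : B = B' := by
  obtain ⟨b, hb⟩ := exists_mulVec_zero_one_eq_of_flagPlane_eq hP
  have hB : B = B' * !![1, 0; 0, b] := by
    refine ext_of_mulVec_single fun i => ?_
    fin_cases i
    · simpa [funext_iff, Fin.forall_fin_two, mul_apply] using mulVec_one_zero_eq_of_flagLine_eq hL
    · simpa [funext_iff, Fin.forall_fin_two, mul_apply] using hb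
  have hb1 : b = 1 := by
    rw [hB, det_mul, det_fin_two_of] at hdet
    exact mul_right_cancel₀ hB' (by linear_combination hdet)
  rw [hB, hb1, ← one_fin_two, mul_one]

lemma exists_eq_span_embAffine {V : Submodule ℝ (Fin 3 → ℝ)} (hV : Module.finrank ℝ V = 1)
    (hVP : ¬ V ≤ span ℝ {![1, 0, 0], ![0, 0, 1]}) : ∃ p, V = span ℝ {embAffine p} := by
  obtain ⟨v, hvV, hvP⟩ := SetLike.not_le_iff_exists.1 hVP
  have hv1 : v 1 ≠ 0 := mt mem_span_e₁_e₃_iff.2 hvP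
  obtain ⟨p, hp⟩ : ∃ p, v = v 1 • embAffine p := by
    refine ⟨(v 1)⁻¹ • ![v 0, v 2], ?_⟩
    rw [embAffine, smul_add, map_smul, smul_smul, mul_inv_cancel₀ hv1, one_smul]
    exact eq_smul_e₂_add_embPlane v
  refine ⟨p, eq_span_singleton_of_mem_of_finrank_eq_one hV hvV ?_ |>.trans ?_⟩
  · rintro rfl
    simp at hv1
  · rw [hp, span_singleton_smul_eq (isUnit_iff_ne_zero.2 hv1)]

lemma exists_embPlane_mem {W : Submodule ℝ (Fin 3 → ℝ)} {p : Fin 2 → ℝ} {w : Fin 3 → ℝ}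
    (hp : embAffine p ∈ W) (hw : w ∈ W) (hwp : w ∉ span ℝ {embAffine p}) :
    ∃ q ≠ 0, embPlane q ∈ W := by
  obtain ⟨c, u, rfl⟩ : ∃ c u, w = c • e₂ + embPlane u := ⟨_, _, eq_smul_e₂_add_embPlane w⟩
  have hq : embPlane (u - c • p) = c • e₂ + embPlane u - c • embAffine p := by
    rw [map_sub, map_smul, embAffine]
    module
  refine ⟨u - c • p, fun h0 => hwp ?_, hq ▸ sub_mem hw (smul_mem _ _ hp)⟩
  rw [h0, map_zero, eq_comm, sub_eq_zero] at hq
  exact hq ▸ smul_mem _ _ (mem_span_singleton_self _)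

lemma det_ne_zero_of_flagPlane_le {B : Matrix (Fin 2) (Fin 2) ℝ} {W : Submodule ℝ (Fin 3 → ℝ)}
    (hle : flagPlane B ≤ W) (he₂ : e₂ ∉ W) (hq : B *ᵥ ![0, 1] ≠ 0) : B.det ≠ 0 := by
  intro hdet
  obtain ⟨v, hv0, hv⟩ := exists_mulVec_eq_zero_iff.2 hdet
  have hv' : v = ![v 0, v 1] := by ext i; fin_cases i <;> rfl
  have hmem : v 0 • e₂ ∈ W := by
    refine hle (mem_flagPlane_iff.2 ⟨v 0, v 1, ?_⟩)
    rw [← hv', hv, map_zero, add_zero]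
  by_cases ha : v 0 = 0
  · have hb : v 1 ≠ 0 := fun hb => hv0 (by rw [hv', ha, hb]; simp)
    refine hq (smul_right_injective _ hb (?_ : v 1 • B *ᵥ ![0, 1] = v 1 • 0))
    rw [smul_zero, ← mulVec_smul, ← hv, hv', ha]
    simp
  · exact he₂ (by simpa [ha] using smul_mem W (v 0)⁻¹ hmem)

def ofCols (p q : Fin 2 → ℝ) : Matrix (Fin 2) (Fin 2) ℝ := !![p 0, q 0; p 1, q 1]

lemma ofCols_mulVec_one_zero (p q : Fin 2 → ℝ) : ofCols p q *ᵥ ![1, 0] = p := by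
  ext i; fin_cases i <;> simp [ofCols]

lemma ofCols_mulVec_zero_one (p q : Fin 2 → ℝ) : ofCols p q *ᵥ ![0, 1] = q := by
  ext i; fin_cases i <;> simp [ofCols]

lemma det_ofCols_smul (p q : Fin 2 → ℝ) (c : ℝ) : (ofCols p (c • q)).det = c * (ofCols p q).det := by
  simp only [ofCols, det_fin_two_of, Pi.smul_apply, smul_eq_mul]
  ring

lemma flagPlane_le_iff {B : Matrix (Fin 2) (Fin 2) ℝ} {W : Submodule ℝ (Fin 3 → ℝ)} :
    flagPlane B ≤ W ↔ embAffine (B *ᵥ ![1, 0]) ∈ W ∧ embPlane (B *ᵥ ![0, 1]) ∈ W := by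
  rw [flagPlane, span_le, Set.insert_subset_iff, Set.singleton_subset_iff]
  rfl

theorem exists_flag_eq {V W : Submodule ℝ (Fin 3 → ℝ)} (h : MemOmega V W) :
    ∃ B : Matrix.SpecialLinearGroup (Fin 2) ℝ, flagLine B = V ∧ flagPlane B = W := by
  obtain ⟨hV, hW, hVW, hVP, he₂⟩ := h
  obtain ⟨p, rfl⟩ := exists_eq_span_embAffine hV hVP
  have hpW : embAffine p ∈ W := hVW (mem_span_singleton_self _)
  have hVW' : span ℝ {embAffine p} < W := hVW.lt_of_ne fun h => by
    rw [h, hW] at hV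
    simp at hV
  obtain ⟨w, hwW, hwV⟩ := SetLike.exists_of_lt hVW'
  obtain ⟨q, hq, hqW⟩ := exists_embPlane_mem hpW hwW hwV
  have hd : (ofCols p q).det ≠ 0 := by
    refine det_ne_zero_of_flagPlane_le ?_ he₂ (by rwa [ofCols_mulVec_zero_one])
    rw [flagPlane_le_iff, ofCols_mulVec_one_zero, ofCols_mulVec_zero_one]
    exact ⟨hpW, hqW⟩
  let B : Matrix.SpecialLinearGroup (Fin 2) ℝ :=
    ⟨ofCols p ((ofCols p q).det⁻¹ • q), by rw [det_ofCols_smul, inv_mul_cancel₀ hd]⟩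
  have hle : flagPlane B ≤ W := by
    rw [flagPlane_le_iff, ofCols_mulVec_one_zero, ofCols_mulVec_zero_one, map_smul]
    exact ⟨hpW, smul_mem W _ hqW⟩
  refine ⟨B, by rw [flagLine, ofCols_mulVec_one_zero], eq_of_le_of_finrank_eq hle ?_⟩
  rw [(memOmega_flag (by rw [B.2]; exact one_ne_zero)).2.1, hW]

end OmegaFlag

/-- the action of `SL(2,ℝ)` via `ι` preserves `Ω` and is simply
transitive on `Ω`. -/
theorem stmt13 :
    (∀ A : Matrix.SpecialLinearGroup (Fin 2) ℝ, ∀ V W : Submodule ℝ (Fin 3 → ℝ),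
      MemOmega V W →
        MemOmega (Submodule.map (iota A).1.mulVecLin V)
          (Submodule.map (iota A).1.mulVecLin W)) ∧
    (∀ V W V' W' : Submodule ℝ (Fin 3 → ℝ), MemOmega V W → MemOmega V' W' →
      ∃! A : Matrix.SpecialLinearGroup (Fin 2) ℝ,
        Submodule.map (iota A).1.mulVecLin V = V' ∧
        Submodule.map (iota A).1.mulVecLin W = W') := by
  open OmegaFlag in
  refine ⟨fun A V W h => ?_, fun V W V' W' h h' => ?_⟩
  · obtain ⟨B, rfl, rfl⟩ := exists_flag_eq h
    rw [map_iota_flagLine, map_iota_flagPlane]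
    exact memOmega_flag (by simp)
  · obtain ⟨B, rfl, rfl⟩ := exists_flag_eq h
    obtain ⟨B', rfl, rfl⟩ := exists_flag_eq h'
    have hB : (B' * B⁻¹).1 * B.1 = B'.1 := congrArg Subtype.val (inv_mul_cancel_right B' B)
    refine ⟨B' * B⁻¹, ⟨?_, ?_⟩, fun A ⟨hL, hP⟩ => eq_mul_inv_of_mul_eq (Subtype.ext ?_)⟩
    · rw [map_iota_flagLine, hB]
    · rw [map_iota_flagPlane, hB]
    rw [map_iota_flagLine] at hL
    rw [map_iota_flagPlane] at hP
    exact eq_of_flag_eq (by simp) (by simp) hL hP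
end
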